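/- Let A be the block-diagonal matrix over ℤ/2ℤ with l copies of [1], m₁ copies of [0], and m₂ copies of [[0,1],[1,0]] (so A has size k = l + m₁ + 2m₂). Then det(A) · rank(A) ≡ 1 (mod 2) if and only if m₁ = 0 and l is odd. -/

import Mathlib

/-! For `m₁ > 0` the matrix has a zero row, so its determinant vanishes. For `m₁ = 0` it is the
permutation matrix of the involution swapping the two coordinates of every hyperbolic block; in
characteristic two its determinant `sign σ` is `1`, and it is invertible, so its rank is its size
`l + 2 m₂ ≡ l (mod 2)`. -/

def normalFormMatrix (l m₁ m₂ : ℕ) :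
    Matrix (Fin l ⊕ (Fin m₁ ⊕ Fin m₂ × Fin 2)) (Fin l ⊕ (Fin m₁ ⊕ Fin m₂ × Fin 2)) (ZMod 2) :=
  fun i j => match i, j with
  | Sum.inl a, Sum.inl b => if a = b then 1 else 0
  | Sum.inr (Sum.inr (a, x)), Sum.inr (Sum.inr (b, y)) => if a = b ∧ x ≠ y then 1 else 0
  | _, _ => 0

open Matrix

lemma Matrix.det_submatrix_one_of_charTwo {n R : Type*} [Fintype n] [DecidableEq n] [CommRing R]
    [CharP R 2] (σ : Equiv.Perm n) : ((1 : Matrix n n R).submatrix σ id).det = 1 := by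
  rw [det_permute, det_one, mul_one]
  rcases Int.units_eq_one_or (Equiv.Perm.sign σ) with h | h <;> simp [h, CharTwo.neg_eq]

lemma Matrix.rank_submatrix_one {n R : Type*} [Fintype n] [DecidableEq n] [CommSemiring R]
    [StrongRankCondition R] (σ : Equiv.Perm n) :
    ((1 : Matrix n n R).submatrix σ id).rank = Fintype.card n := by
  rw [← Equiv.coe_refl, rank_submatrix, rank_one]

lemma Fin.swap_zero_one_eq_iff_ne (x y : Fin 2) : Equiv.swap 0 1 x = y ↔ x ≠ y := by
  revert x y; decide

def normalFormMatrix.blockSwap (l m₁ m₂ : ℕ) : Equiv.Perm (Fin l ⊕ (Fin m₁ ⊕ Fin m₂ × Fin 2)) :=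
  .sumCongr (.refl _) (.sumCongr (.refl _) (.prodCongr (.refl _) (.swap 0 1)))

lemma normalFormMatrix_zero_eq_submatrix_one (l m₂ : ℕ) :
    normalFormMatrix l 0 m₂ =
      (1 : Matrix _ _ (ZMod 2)).submatrix (normalFormMatrix.blockSwap l 0 m₂) id := by
  ext (a | b | ⟨a, x⟩) (b | c | ⟨b, y⟩) <;>
    simp [normalFormMatrix, normalFormMatrix.blockSwap, one_apply, Fin.swap_zero_one_eq_iff_ne]
  exact isEmptyElim b

lemma det_normalFormMatrix_of_pos {l m₁ : ℕ} (m₂ : ℕ) (hm₁ : 0 < m₁) :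
    (normalFormMatrix l m₁ m₂).det = 0 :=
  det_eq_zero_of_row_eq_zero (.inr (.inl ⟨0, hm₁⟩)) fun j => by rcases j with _ | _ | _ <;> rfl

theorem normalFormMatrix_det_mul_rank (l m₁ m₂ : ℕ) :
    (normalFormMatrix l m₁ m₂).det * ((normalFormMatrix l m₁ m₂).rank : ZMod 2) = 1 ↔
      m₁ = 0 ∧ Odd l := by
  rcases Nat.eq_zero_or_pos m₁ with rfl | hm₁
  · rw [normalFormMatrix_zero_eq_submatrix_one, det_submatrix_one_of_charTwo, rank_submatrix_one,
      one_mul, ZMod.natCast_eq_one_iff_odd]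
    simp [Nat.odd_add]
  · simp [det_normalFormMatrix_of_pos m₂ hm₁, hm₁.ne']
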